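/- Let X be a geodesic metric space that is δ-hyperbolic (every geodesic triangle is δ-thin), and let A and B be K-quasiconvex subsets of X, meaning every geodesic segment joining two points of the set lies in the closed K-neighborhood of the set. Suppose there exist points a, a' ∈ A and b, b' ∈ B with dist(a,b) ≤ L, dist(a',b') ≤ L, and dist(a,a') > 2L + 4δ. Then the infimal distance between A and B is at most 2K + 2δ; that is, there exist p ∈ A and q ∈ B with dist(p,q) ≤ 2K + 2δ. -/

import Mathlib

/-!
Let `m` be the midpoint of a geodesic `[a, a']`. The geodesic quadrilateral `a a' b' b` is
`2δ`-thin (split it along a diagonal into two `δ`-thin triangles), so `m` is `2δ`-close to a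
point `q` of `[a', b']`, `[a, b]` or `[b, b']`. The first two sides have length at most `L` and
`m` is at distance `dist a a' / 2 > L + 2δ` from both `a` and `a'`, so `q ∈ [b, b']`.
Quasiconvexity moves `m` into `A` and `q` into `B` at cost `K` each.
-/

/-- `s` is a geodesic segment from `x` to `y`: the image of an isometric
embedding `γ : [0, dist x y] → X` with `γ 0 = x` and `γ (dist x y) = y`. -/
def IsGeodesicSegment {X : Type*} [MetricSpace X] (x y : X) (s : Set X) : Prop :=
  ∃ γ : ℝ → X,
    (∀ a ∈ Set.Icc (0 : ℝ) (dist x y), ∀ b ∈ Set.Icc (0 : ℝ) (dist x y),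
      dist (γ a) (γ b) = |a - b|) ∧
    γ 0 = x ∧ γ (dist x y) = y ∧ s = γ '' Set.Icc 0 (dist x y)

/-- `X` is a geodesic metric space: any two points are joined by a geodesic segment. -/
def GeodesicSpace (X : Type*) [MetricSpace X] : Prop :=
  ∀ x y : X, ∃ s : Set X, IsGeodesicSegment x y s

/-- `X` is `δ`-hyperbolic: every geodesic triangle is `δ`-thin, i.e. each side is
contained in the closed `δ`-neighborhood of the union of the other two sides. -/
def DeltaHyperbolic (X : Type*) [MetricSpace X] (δ : ℝ) : Prop :=
  ∀ x y z : X, ∀ s t u : Set X,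
    IsGeodesicSegment x y s → IsGeodesicSegment y z t → IsGeodesicSegment z x u →
    ∀ p ∈ s, ∃ q ∈ t ∪ u, dist p q ≤ δ

/-- `A` is `K`-quasiconvex: every geodesic segment joining two points of `A` lies
in the closed `K`-neighborhood of `A`. -/
def Quasiconvex {X : Type*} [MetricSpace X] (K : ℝ) (A : Set X) : Prop :=
  ∀ x ∈ A, ∀ y ∈ A, ∀ s : Set X, IsGeodesicSegment x y s →
    ∀ p ∈ s, ∃ q ∈ A, dist p q ≤ K

section

variable {X : Type*} [MetricSpace X]

theorem isGeodesicSegment_singleton (x : X) : IsGeodesicSegment x x {x} := by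
  refine ⟨fun _ ↦ x, fun a ha b hb ↦ ?_, rfl, rfl, ?_⟩
  · rw [dist_self] at ha hb
    simp [le_antisymm ha.2 ha.1, le_antisymm hb.2 hb.1]
  · simp

namespace IsGeodesicSegment

variable {x y : X} {s : Set X}

theorem dist_left_le (h : IsGeodesicSegment x y s) {p : X} (hp : p ∈ s) :
    dist p x ≤ dist x y := by
  obtain ⟨γ, hiso, h0, -, rfl⟩ := h
  obtain ⟨t, ht, rfl⟩ := hp
  have hdist := hiso t ht 0 ⟨le_rfl, dist_nonneg⟩
  rw [h0, sub_zero, abs_of_nonneg ht.1] at hdist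
  exact hdist.le.trans ht.2

theorem exists_midpoint (h : IsGeodesicSegment x y s) :
    ∃ m ∈ s, dist m x = dist x y / 2 ∧ dist m y = dist x y / 2 := by
  obtain ⟨γ, hiso, h0, hd, rfl⟩ := h
  have hpos : 0 ≤ dist x y := dist_nonneg
  have hhalf : dist x y / 2 ∈ Set.Icc 0 (dist x y) := ⟨by linarith, by linarith⟩
  refine ⟨γ (dist x y / 2), ⟨_, hhalf, rfl⟩, ?_, ?_⟩
  · have hdist := hiso _ hhalf 0 ⟨le_rfl, hpos⟩
    rwa [h0, sub_zero, abs_of_nonneg hhalf.1] at hdist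
  · have hdist := hiso _ hhalf _ ⟨hpos, le_rfl⟩
    rw [hd] at hdist
    rw [hdist, abs_of_nonpos (by linarith)]
    ring

end IsGeodesicSegment

namespace DeltaHyperbolic

variable {δ : ℝ}

theorem nonneg [Nonempty X] (hhyp : DeltaHyperbolic X δ) : 0 ≤ δ := by
  obtain ⟨x⟩ := ‹Nonempty X›
  have hx := isGeodesicSegment_singleton x
  obtain ⟨q, -, hq⟩ := hhyp x x x _ _ _ hx hx hx x rfl
  exact dist_nonneg.trans hq

theorem exists_dist_le_of_quadrilateral (hgeo : GeodesicSpace X) (hhyp : DeltaHyperbolic X δ)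
    {x y z w : X} {s t u v : Set X} (hs : IsGeodesicSegment x y s)
    (ht : IsGeodesicSegment y z t) (hu : IsGeodesicSegment x w u)
    (hv : IsGeodesicSegment w z v) {p : X} (hp : p ∈ s) :
    ∃ q ∈ t ∪ u ∪ v, dist p q ≤ 2 * δ := by
  have : Nonempty X := ⟨x⟩
  have hδ := hhyp.nonneg
  obtain ⟨e, he⟩ := hgeo z x
  obtain ⟨q, hq | hq, hpq⟩ := hhyp x y z s t e hs ht he p hp
  · exact ⟨q, .inl (.inl hq), by linarith⟩
  obtain ⟨r, hr | hr, hqr⟩ := hhyp z x w e u v he hu hv q hq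
  · exact ⟨r, .inl (.inr hr), by linarith [dist_triangle p q r]⟩
  · exact ⟨r, .inr hr, by linarith [dist_triangle p q r]⟩

end DeltaHyperbolic

end

theorem quasiconvex_sets_close {X : Type*} [MetricSpace X] (δ K L : ℝ)
    (hgeo : GeodesicSpace X) (hhyp : DeltaHyperbolic X δ)
    (A B : Set X) (hA : Quasiconvex K A) (hB : Quasiconvex K B)
    (a a' b b' : X) (haA : a ∈ A) (ha'A : a' ∈ A) (hbB : b ∈ B) (hb'B : b' ∈ B)
    (hab : dist a b ≤ L) (hab' : dist a' b' ≤ L) (hfar : dist a a' > 2 * L + 4 * δ) :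
    ∃ p ∈ A, ∃ q ∈ B, dist p q ≤ 2 * K + 2 * δ := by
  obtain ⟨s, hs⟩ := hgeo a a'
  obtain ⟨t, ht⟩ := hgeo a' b'
  obtain ⟨u, hu⟩ := hgeo a b
  obtain ⟨v, hv⟩ := hgeo b b'
  obtain ⟨m, hm, hma, hma'⟩ := hs.exists_midpoint
  obtain ⟨q, (hq | hq) | hq, hmq⟩ :=
    hhyp.exists_dist_le_of_quadrilateral hgeo hs ht hu hv hm
  · linarith [dist_triangle m q a', ht.dist_left_le hq]
  · linarith [dist_triangle m q a, hu.dist_left_le hq]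
  obtain ⟨p, hpA, hmp⟩ := hA a haA a' ha'A s hs m hm
  obtain ⟨r, hrB, hqr⟩ := hB b hbB b' hb'B v hv q hq
  refine ⟨p, hpA, r, hrB, ?_⟩
  linarith [dist_triangle4 p m q r, dist_comm p m]
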